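/- arXiv:1911.07936 — 4 statements merged into one kernel-verified Lean document; each statement's English description precedes it below -/
import Mathlib

section
/- Perfectness of the DARE of multiplication (bijection onto the fiber): let R be a commutative ring and fix x₁, x₂ ∈ R. The map sending (r₁, r₂, r₃) ∈ R³ to the encoding (x₁+r₁, x₂+r₂, r₂x₁+r₃, r₁x₂+r₁r₂−r₃) is injective, and its image is exactly the set {(c₁,c₂,c₃,c₄) ∈ R⁴ : c₁c₂ − c₃ − c₄ = x₁x₂}. -/
/-- Perfectness of the DARE of multiplication: the encoding map
`(r₁,r₂,r₃) ↦ (x₁+r₁, x₂+r₂, r₂x₁+r₃, r₁x₂+r₁r₂−r₃)` is injective and its range is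
exactly the fiber `{(c₁,c₂,c₃,c₄) : c₁c₂ − c₃ − c₄ = x₁x₂}`. -/
theorem dare_mul_perfect {R : Type*} [CommRing R] (x₁ x₂ : R) :
    Function.Injective (fun r : R × R × R =>
      (x₁ + r.1, x₂ + r.2.1, r.2.1 * x₁ + r.2.2, r.1 * x₂ + r.1 * r.2.1 - r.2.2)) ∧
    Set.range (fun r : R × R × R =>
      (x₁ + r.1, x₂ + r.2.1, r.2.1 * x₁ + r.2.2, r.1 * x₂ + r.1 * r.2.1 - r.2.2)) =
      {c : R × R × R × R | c.1 * c.2.1 - c.2.2.1 - c.2.2.2 = x₁ * x₂} := by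
  constructor
  · rintro ⟨a1, a2, a3⟩ ⟨b1, b2, b3⟩ h
    simp only [Prod.mk.injEq] at h
    obtain ⟨h1, h2, h3, _⟩ := h
    have e1 : a1 = b1 := by linear_combination h1
    have e2 : a2 = b2 := by linear_combination h2
    have e3 : a3 = b3 := by linear_combination h3 - x₁ * h2
    simp [e1, e2, e3]
  · ext ⟨c1, c2, c3, c4⟩
    simp only [Set.mem_range, Set.mem_setOf_eq, Prod.mk.injEq]
    constructor
    · rintro ⟨⟨r1, r2, r3⟩, h1, h2, h3, h4⟩
      subst h1 h2 h3 h4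
      ring
    · intro h
      exact ⟨(c1 - x₁, c2 - x₂, c3 - (c2 - x₂) * x₁), by ring, by ring, by ring,
        by linear_combination h⟩
end

section
/- Perfect security of the multiplication encoding as a distribution statement: let R be a finite commutative ring and let r₁, r₂, r₃ be independent and uniformly distributed on R. For any inputs x₁, x₂ ∈ R, the distribution of the encoding (x₁+r₁, x₂+r₂, r₂x₁+r₃, r₁x₂+r₁r₂−r₃) equals the distribution of Sim(x₁x₂; a₁,a₂,a₃) = (a₁, a₂, a₃, a₁a₂ − x₁x₂ − a₃) where a₁, a₂, a₃ are independent and uniformly distributed on R. In particular, the distribution of the encoding depends on (x₁, x₂) only through the product x₁x₂. -/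
lemma map_equiv_uniform {α : Type*} [Fintype α] [Nonempty α] (e : α ≃ α) :
    PMF.map e (PMF.uniformOfFintype α) = PMF.uniformOfFintype α := by
  ext x
  rw [PMF.map_apply]
  rw [tsum_eq_single (e.symm x) (by
    intro b hb
    simp only [PMF.uniformOfFintype_apply]
    rw [if_neg]
    intro h
    exact hb (by simp [h]))]
  simp

/-- Perfect security of the multiplication DARE: over a finite commutative ring, with
`r₁,r₂,r₃` independent uniform, the distribution of the encoding
`(x₁+r₁, x₂+r₂, r₂x₁+r₃, r₁x₂+r₁r₂−r₃)` equals the distribution of the simulator output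
`(a₁, a₂, a₃, a₁a₂ − x₁x₂ − a₃)` with `a₁,a₂,a₃` independent uniform. -/
theorem dare_mul_perfect_security {R : Type*} [CommRing R] [Fintype R] [DecidableEq R]
    [Nonempty R] (x₁ x₂ : R) :
    PMF.map (fun r : R × R × R =>
        (x₁ + r.1, x₂ + r.2.1, r.2.1 * x₁ + r.2.2, r.1 * x₂ + r.1 * r.2.1 - r.2.2))
      (PMF.uniformOfFintype (R × R × R)) =
    PMF.map (fun a : R × R × R =>
        (a.1, a.2.1, a.2.2, a.1 * a.2.1 - x₁ * x₂ - a.2.2))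
      (PMF.uniformOfFintype (R × R × R)) := by
  set e : R × R × R ≃ R × R × R :=
    { toFun := fun r => (x₁ + r.1, x₂ + r.2.1, r.2.1 * x₁ + r.2.2)
      invFun := fun a => (a.1 - x₁, a.2.1 - x₂, a.2.2 - (a.2.1 - x₂) * x₁)
      left_inv := by intro r; simp
      right_inv := by
        intro a
        refine Prod.ext (by simp) (Prod.ext (by simp) ?_)
        simp } with he
  have key : (fun r : R × R × R =>
      (x₁ + r.1, x₂ + r.2.1, r.2.1 * x₁ + r.2.2, r.1 * x₂ + r.1 * r.2.1 - r.2.2)) =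
      (fun a : R × R × R => (a.1, a.2.1, a.2.2, a.1 * a.2.1 - x₁ * x₂ - a.2.2)) ∘ e := by
    funext r
    simp only [Function.comp_apply, he, Equiv.coe_fn_mk]
    refine Prod.ext rfl (Prod.ext rfl (Prod.ext rfl ?_))
    ring
  rw [key, ← PMF.map_comp, map_equiv_uniform]
end

section
/- Perfectness of the n-dimensional dot-product encoding (bijection onto the fiber): let R be a commutative ring, n ∈ ℕ, and fix x, y ∈ Rⁿ. The map sending (r₁, r₂, r₃) ∈ Rⁿ × Rⁿ × R to the encoding (C¹, C², C³, C⁴) = (x + r₁, y + r₂, ⟨r₂, x⟩ + r₃, ⟨r₁, y⟩ + ⟨r₁, r₂⟩ − r₃) is injective, and its image is exactly the set {(c¹, c², c³, c⁴) ∈ Rⁿ × Rⁿ × R × R : ⟨c¹, c²⟩ − c³ − c⁴ = ⟨x, y⟩}. In particular, the encoding reveals nothing beyond the dot product ⟨x, y⟩. -/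
/-- Perfectness of the n-dimensional dot-product encoding: the map
`(r₁,r₂,r₃) ↦ (x+r₁, y+r₂, ⟨r₂,x⟩+r₃, ⟨r₁,y⟩+⟨r₁,r₂⟩−r₃)` is injective and its range is
exactly the fiber of encodings decoding to `⟨x,y⟩`. -/
theorem framework_dot_perfect {R : Type*} [CommRing R] (n : ℕ) (x y : Fin n → R) :
    Function.Injective (fun r : (Fin n → R) × (Fin n → R) × R =>
      ((x + r.1, y + r.2.1, (∑ d, r.2.1 d * x d) + r.2.2,
        (∑ d, r.1 d * y d) + (∑ d, r.1 d * r.2.1 d) - r.2.2) :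
        (Fin n → R) × (Fin n → R) × R × R)) ∧
    Set.range (fun r : (Fin n → R) × (Fin n → R) × R =>
      ((x + r.1, y + r.2.1, (∑ d, r.2.1 d * x d) + r.2.2,
        (∑ d, r.1 d * y d) + (∑ d, r.1 d * r.2.1 d) - r.2.2) :
        (Fin n → R) × (Fin n → R) × R × R)) =
      {c : (Fin n → R) × (Fin n → R) × R × R |
        (∑ d, c.1 d * c.2.1 d) - c.2.2.1 - c.2.2.2 = ∑ d, x d * y d} := by
  constructor
  · rintro ⟨r1, r2, r3⟩ ⟨s1, s2, s3⟩ h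
    simp only [Prod.mk.injEq] at h
    obtain ⟨h1, h2, h3, h4⟩ := h
    have e1 : r1 = s1 := by
      have := h1; exact by
        funext d; have := congrFun h1 d; simpa using this
    have e2 : r2 = s2 := by
      funext d; have := congrFun h2 d; simpa using this
    subst e1; subst e2
    have e3 : r3 = s3 := add_left_cancel h3
    rw [e3]
  · ext ⟨c1, c2, c3, c4⟩
    simp only [Set.mem_range, Set.mem_setOf_eq, Prod.mk.injEq]
    constructor
    · rintro ⟨⟨r1, r2, r3⟩, h1, h2, h3, h4⟩
      subst h1 h2 h3 h4
      simp only [Pi.add_apply]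
      have : ∑ d, (x d + r1 d) * (y d + r2 d) =
          ∑ d, (x d * y d + (r2 d * x d + (r1 d * y d + r1 d * r2 d))) := by
        apply Finset.sum_congr rfl; intro d _; ring
      rw [this, Finset.sum_add_distrib, Finset.sum_add_distrib, Finset.sum_add_distrib]
      ring
    · intro h
      refine ⟨⟨c1 - x, c2 - y, c3 - ∑ d, (c2 d - y d) * x d⟩, ?_, ?_, ?_, ?_⟩
      · funext d; simp
      · funext d; simp
      · simp only [Pi.sub_apply]; ring
      · have expand : ∑ d, c1 d * c2 d =
            ∑ d, (x d * y d + ((c2 d - y d) * x d + ((c1 d - x d) * y d +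
              (c1 d - x d) * (c2 d - y d)))) := by
          apply Finset.sum_congr rfl; intro d _; ring
        rw [expand, Finset.sum_add_distrib, Finset.sum_add_distrib,
          Finset.sum_add_distrib] at h
        linear_combination h
end

section
/- Correctness of the server's cross gram-matrix computation: let R be a commutative ring and let X be an n_f × n_a matrix and Y an n_f × n_b matrix over R (columns are samples, rows are features). Let r₁, r₂ ∈ R^{n_f} and r₃ ∈ R. Define C¹_{·i} = X_{·i} + r₁ and C³_i = ∑_{d=1}^{n_f} ((r₂)_d X_{di}) + r₃ for all i ∈ {1,…,n_a}, and C²_{·j} = Y_{·j} + r₂ and C⁴_j = ∑_{d=1}^{n_f} ((r₁)_d Y_{dj} + (r₁)_d (r₂)_d) − r₃ for all j ∈ {1,…,n_b}. Then for all i, j, the server's value k_{ij} = ∑_{d=1}^{n_f} C¹_{di} C²_{dj} − C³_i − C⁴_j equals (Xᵀ Y)_{ij}, the dot product between the i-th sample of Alice and the j-th sample of Bob. -/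
open Matrix

/-- Correctness of the server's cross gram-matrix computation: for all `i, j`, the
decoded value `k_{ij} = ∑_d C¹_{di} C²_{dj} − C³_i − C⁴_j` equals `(Xᵀ Y)_{ij}`. -/
theorem framework_cross_gram_correct {R : Type*} [CommRing R]
    (n_f n_a n_b : ℕ) (X : Matrix (Fin n_f) (Fin n_a) R)
    (Y : Matrix (Fin n_f) (Fin n_b) R) (r₁ r₂ : Fin n_f → R) (r₃ : R)
    (i : Fin n_a) (j : Fin n_b) :
    (∑ d, (X d i + r₁ d) * (Y d j + r₂ d))
      - ((∑ d, r₂ d * X d i) + r₃)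
      - ((∑ d, (r₁ d * Y d j + r₁ d * r₂ d)) - r₃)
      = (Xᵀ * Y) i j := by
  simp only [Matrix.mul_apply, Matrix.transpose_apply, add_mul, mul_add,
    Finset.sum_add_distrib]
  ring_nf
  rw [Finset.sum_congr rfl (fun d _ => mul_comm (X d i) (r₂ d))]
  ring
end
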